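/- Let E = {a, b, c, d, e, f, g, h, i, j, k} be an 11-element set and let 𝓕 be the 15 triples {a,b,k}, {b,c,e}, {c,d,i}, {a,d,f}, {b,d,h}, {a,c,j}, {e,f,i}, {f,g,c}, {g,h,j}, {h,e,a}, {e,g,d}, {f,h,k}, {i,j,b}, {j,k,e}, {k,i,g}. Suppose M1 is a matroid on E whose bases are exactly the 3-element subsets B of E satisfying |B ∩ F| ≤ 2 for every F ∈ 𝓕. Then there exists no connected matroid M' on E whose set of bases is a proper subset of the set of bases of M1 and which has {a,b,c,d} as a flat with r_{M'}({a,b,c,d}) = 1 such that M'|{a,b,c,d} and M'/{a,b,c,d} are both connected. (That is, M1 has no included matroid base system having ({a,b,c,d},1)_≤ as a facet-defining inequality.) -/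

import Mathlib

open Set Matroid

namespace PaperWMO

variable {α : Type*}

/-- The rank of a set `X` in a matroid `M`: the size of a largest independent subset of `X`. -/
noncomputable def rk (M : Matroid α) (X : Set α) : ℕ :=
  sSup {n : ℕ | ∃ I, M.Indep I ∧ I ⊆ X ∧ I.ncard = n}

/-- Contraction of the set `C` in the matroid `M`, defined by duality:
`M / C = (M✶ \ C)✶`, where deletion is restriction to the complement. -/
noncomputable def contract (M : Matroid α) (C : Set α) : Matroid α :=
  (M✶ ↾ (M.E \ C))✶

/-- A matroid is connected if its ground set is nonempty and it is not the direct sum of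
two matroids on nonempty disjoint ground sets. -/
def Conn (M : Matroid α) : Prop :=
  M.E.Nonempty ∧ ¬ ∃ (M₁ M₂ : Matroid α) (h : Disjoint M₁.E M₂.E),
    M₁.E.Nonempty ∧ M₂.E.Nonempty ∧ M = Matroid.disjointSum M₁ M₂ h

/-- A flat of `M`: a subset `F` of the ground set such that any superset
`B` with `F ⊆ B ⊆ M.E` of the same rank equals `F`. -/
def IsFlat (M : Matroid α) (F : Set α) : Prop :=
  F ⊆ M.E ∧ ∀ B : Set α, F ⊆ B → B ⊆ M.E → rk M B = rk M F → B = F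

/-- A matroid is simple if every subset of the ground set with at most two elements
is independent. -/
def IsSimple (M : Matroid α) : Prop :=
  ∀ X ⊆ M.E, X.ncard ≤ 2 → M.Indep X

/-- A facet-defining flat of rank 2: a flat `F` of rank 2 such that
both the restriction `M ↾ F` and the contraction `M / F` are connected. -/
def FacetFlat2 (M : Matroid α) (F : Set α) : Prop :=
  IsFlat M F ∧ rk M F = 2 ∧ Conn (M ↾ F) ∧ Conn (contract M F)

/-- `M` is 2-decomposable by the hyperplane `(A, a)_=`. -/
def TwoDecomposableBy (M : Matroid α) (A : Set α) (a : ℕ) : Prop :=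
  (∃ N₁ : Matroid α, N₁.E = M.E ∧
      ∀ B : Set α, N₁.IsBase B ↔ M.IsBase B ∧ (B ∩ A).ncard ≤ a) ∧
  (∃ N₂ : Matroid α, N₂.E = M.E ∧
      ∀ B : Set α, N₂.IsBase B ↔ M.IsBase B ∧ a ≤ (B ∩ A).ncard) ∧
  (∃ B : Set α, M.IsBase B ∧ a < (B ∩ A).ncard) ∧
  (∃ B : Set α, M.IsBase B ∧ (B ∩ A).ncard < a)

/-- A 3-partition in `M`: a partition of the ground set into three parts, each of size
at least two, such that no facet-defining flat of rank 2 meets all three parts, and the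
union of any two parts has rank 3. -/
def ThreePartition (M : Matroid α) (A₁ A₂ A₃ : Set α) : Prop :=
  A₁ ∪ A₂ ∪ A₃ = M.E ∧
  Disjoint A₁ A₂ ∧ Disjoint A₂ A₃ ∧ Disjoint A₁ A₃ ∧
  2 ≤ A₁.ncard ∧ 2 ≤ A₂.ncard ∧ 2 ≤ A₃.ncard ∧
  (¬ ∃ F : Set α, FacetFlat2 M F ∧
      (F ∩ A₁).Nonempty ∧ (F ∩ A₂).Nonempty ∧ (F ∩ A₃).Nonempty) ∧
  rk M (A₁ ∪ A₂) = 3 ∧ rk M (A₂ ∪ A₃) = 3 ∧ rk M (A₃ ∪ A₁) = 3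

/-- The adjacency relation of the graph `g(A, B)` (with respect to the matroid `M`):
the vertex set is `B`, and distinct `x, y ∈ B` are adjacent iff some facet-defining flat
of rank 2 of `M` contains both `x` and `y` and meets `A`. -/
def gAdj (M : Matroid α) (A B : Set α) (x y : α) : Prop :=
  x ∈ B ∧ y ∈ B ∧ x ≠ y ∧
    ∃ F : Set α, FacetFlat2 M F ∧ x ∈ F ∧ y ∈ F ∧ (F ∩ A).Nonempty

/-- `C` is the vertex set of a connected component of the graph `g(S, V)`. -/
def IsGComponent (M : Matroid α) (S V C : Set α) : Prop :=
  ∃ x ∈ V, C = {y | y ∈ V ∧ Relation.ReflTransGen (gAdj M S V) x y}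

/-!
Write `N = M' ／ {0, 1, 2, 3}`. A flat of rank one is the parallel class of any of its
elements, so `{0, 1, 2, 3} = cl {0}`, and the lines of `M₁` meeting `{0, 1, 2, 3}` in one point
make `4, 5, 6, 7` parallel and `8, 9` parallel in `N`. A connected loopless matroid of rank two
has at least three parallel classes, so the classes of `4`, `8` and `10` in `N` are distinct.
Then each of the lines `{4, 5, 8}`, `{6, 7, 9}`, `{5, 7, 10}` of `M₁` joins two points of one
class of `N` to a point of another, which forces `4, 5, 6, 7` to be parallel in `M'` itself.
Now `{10, 8, 6}` and `{9, 10, 4}` put every element outside `{0, 1, 2, 3}` on the line spanned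
by `4` and `10`, which misses `0`; hence `{0, 1, 2, 3}` is a separator of `M'`.
-/

section General

variable {M : Matroid α} {C D F I T X : Set α} {a e x y z : α}

lemma not_conn_of_indep_union (hE : M.E = C ∪ D) (hCD : Disjoint C D) (hC : C.Nonempty)
    (hD : D.Nonempty)
    (hind : ∀ I J, M.Indep I → I ⊆ C → M.Indep J → J ⊆ D → M.Indep (I ∪ J)) : ¬ Conn M := by
  rintro ⟨-, hsplit⟩
  refine hsplit ⟨M ↾ C, M ↾ D, by simpa using hCD, hC, hD,
    ext_indep (by simp [hE]) fun I hI => ?_⟩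
  simp only [disjointSum_indep_iff, restrict_indep_iff, restrict_ground_eq]
  refine ⟨fun hI' => ⟨⟨hI'.subset inter_subset_left, inter_subset_right⟩,
    ⟨hI'.subset inter_subset_left, inter_subset_right⟩, hE ▸ hI⟩, ?_⟩
  rintro ⟨⟨hIC, -⟩, ⟨hID, -⟩, hICD⟩
  rw [← inter_eq_self_of_subset_left hICD, inter_union_distrib_left]
  exact hind _ _ hIC inter_subset_right hID inter_subset_right

lemma Conn.loopless (hM : Conn M) (hE : M.E.Nontrivial) : M.Loopless := by
  refine loopless_iff_forall_not_isLoop.2 fun e he he' => ?_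
  obtain ⟨f, hf, hfe⟩ := hE.exists_ne e
  refine not_conn_of_indep_union (C := {e}) (D := M.E \ {e}) (by simp [he])
    disjoint_sdiff_right (singleton_nonempty e) ⟨f, hf, hfe⟩ (fun I J hI hIC hJ _ => ?_) hM
  obtain rfl | rfl := subset_singleton_iff_eq.1 hIC
  · simpa
  · exact absurd (hI.isNonloop_of_mem rfl) he'.not_isNonloop

lemma not_conn_of_ground_eq_closure_union (he : e ∈ M.E) (hX : (M.closure X).Nonempty)
    (hE : M.E = M.closure {e} ∪ M.closure X) (hdisj : Disjoint (M.closure {e}) (M.closure X)) :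
    ¬ Conn M := by
  refine not_conn_of_indep_union hE hdisj ⟨e, M.mem_closure_self e⟩ hX
    fun I J hI hIC hJ hJX => ?_
  have hI1 : I.Subsingleton := by
    rw [← encard_le_one_iff_subsingleton]
    calc I.encard ≤ M.eRk (M.closure {e}) := hI.encard_le_eRk_of_subset hIC
      _ = M.eRk {e} := M.eRk_closure_eq _
      _ ≤ 1 := M.eRk_singleton_le e
  obtain rfl | ⟨c, rfl⟩ := hI1.eq_empty_or_singleton
  · simpa
  have hc : c ∈ M.closure {e} := hIC rfl
  rw [singleton_union, hJ.insert_indep_iff]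
  exact Or.inl ⟨hE ▸ Or.inl hc,
    fun hcJ => hdisj.notMem_of_mem_left hc (M.closure_subset_closure_of_subset_closure hJX hcJ)⟩

lemma disjoint_closure_singleton [M.Loopless] (he : e ∉ M.closure X) :
    Disjoint (M.closure {e}) (M.closure X) := by
  refine Set.disjoint_left.2 fun w hwe hwX => he ?_
  have hw := M.isNonloop_of_loopless (M.closure_subset_ground _ hwe)
  exact M.closure_subset_closure_of_subset_closure
    (singleton_subset_iff.2 hwX) (hw.mem_closure_singleton hwe)

lemma Conn.closure_singleton_ne [M.Loopless] (hM : Conn M) (hr : 1 < M.eRank) (hx : x ∈ M.E)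
    (hz : z ∈ M.E) (hE : M.E ⊆ M.closure {x} ∪ M.closure {y} ∪ M.closure {z}) :
    M.closure {x} ≠ M.closure {y} := by
  intro hxy
  rw [← hxy, union_self] at hE
  by_cases hxz : z ∈ M.closure {x}
  · rw [← (M.isNonloop_of_loopless hz).closure_eq_of_mem_closure hxz, union_self] at hE
    refine hr.not_ge ?_
    calc M.eRank = M.eRk M.E := M.eRk_ground.symm
      _ ≤ M.eRk (M.closure {z}) := M.eRk_mono hE
      _ = M.eRk {z} := M.eRk_closure_eq _
      _ ≤ 1 := M.eRk_singleton_le z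
  · refine not_conn_of_ground_eq_closure_union hx ⟨z, M.mem_closure_self z⟩
      (hE.antisymm (union_subset (M.closure_subset_ground _) (M.closure_subset_ground _)))
      (disjoint_closure_singleton fun h => ?_) hM
    exact hxz ((M.isNonloop_of_loopless hx).mem_closure_singleton h)

lemma rk_eq_eRk [M.RankFinite] (X : Set α) : (rk M X : ℕ∞) = M.eRk X := by
  obtain ⟨I, hI⟩ := M.exists_isBasis' X
  have hIfin := hI.indep.finite
  have hmax : IsGreatest {n | ∃ J, M.Indep J ∧ J ⊆ X ∧ J.ncard = n} I.ncard := by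
    refine ⟨⟨I, hI.indep, hI.subset, rfl⟩, ?_⟩
    rintro _ ⟨J, hJ, hJX, rfl⟩
    have := hJ.encard_le_eRk_of_subset hJX
    rw [← hI.encard_eq_eRk, ← hJ.finite.cast_ncard_eq, ← hIfin.cast_ncard_eq] at this
    exact_mod_cast this
  rw [rk, hmax.csSup_eq, hIfin.cast_ncard_eq, hI.encard_eq_eRk]

lemma IsFlat.closure_singleton_eq [M.RankFinite] (hF : IsFlat M F) (hr : rk M F = 1)
    (he : e ∈ F) (hne : M.IsNonloop e) : M.closure {e} = F := by
  have hcl : M.closure F = F := hF.2 _ (M.subset_closure F hF.1) (M.closure_subset_ground F)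
    (by exact_mod_cast (rk_eq_eRk _).trans ((M.eRk_closure_eq F).trans (rk_eq_eRk F).symm))
  rw [← hcl]
  refine M.isRkFinite_singleton.closure_eq_closure_of_subset_of_eRk_ge_eRk
    (singleton_subset_iff.2 he) ?_
  rw [← rk_eq_eRk, hr, hne.eRk_eq, Nat.cast_one]

lemma closure_contract_closure (hC : M.closure {e} = C) (X : Set α) :
    (M ／ C).closure X = M.closure (insert e X) \ C := by
  rw [← hC, contract_closure_eq, closure_union_closure_right_eq, union_singleton]

lemma loopless_contract_of_closure_eq (hC : M.closure X = C) : (M ／ C).Loopless :=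
  ⟨by rw [contract_loops_eq, ← hC, closure_closure, sdiff_self]⟩

lemma eRank_le_eRank_contract_closure_add_one (he : M.IsNonloop e) :
    M.eRank ≤ (M ／ M.closure {e}).eRank + 1 := by
  obtain ⟨B, hB, heB⟩ := he.exists_mem_isBase
  have hBe : (M ／ M.closure {e}).Indep (B \ {e}) := by
    rw [he.indep.isBasis_closure.contract_indep_iff, sdiff_union_self,
      union_eq_self_of_subset_right (singleton_subset_iff.2 heB)]
    refine ⟨hB.indep, Set.disjoint_right.2 fun b hb hbe => ?_⟩
    exact hB.indep.notMem_closure_sdiff_of_mem hb.1 (M.closure_subset_closure (Y := B \ {b})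
      (singleton_subset_iff.2 ⟨heB, by simpa [eq_comm] using hb.2⟩) hbe)
  rw [← hB.encard_eq_eRank, ← encard_sdiff_singleton_add_one heB]
  gcongr
  exact hBe.encard_le_eRank

lemma not_indep_of_forall_isBase {M₁ : Matroid α} (hss : ∀ B, M.IsBase B → M₁.IsBase B)
    (hT : T.Finite) (hr : M.eRank ≤ T.encard) (hT₁ : ¬ M₁.IsBase T) : ¬ M.Indep T :=
  fun hI => hT₁ (hss T (hI.isBase_of_eRk_ge hT (hI.eRk_eq_encard ▸ hr)))

lemma mem_closure_singleton_iff [M.Loopless] (hy : y ∈ M.E) :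
    y ∈ M.closure {x} ↔ M.closure {y} = M.closure {x} :=
  ⟨(M.isNonloop_of_loopless hy).closure_eq_of_mem_closure, fun h => h ▸ M.mem_closure_self y⟩

lemma mem_closure_of_not_indep_subset_insert (hI : M.Indep I) (hT : ¬ M.Indep T)
    (hTI : T ⊆ insert y I) (hy : y ∈ M.E) : y ∈ M.closure I := by
  by_contra h
  exact hT ((hI.insert_indep_iff.2 (Or.inl ⟨hy, h⟩)).subset hTI)

lemma mem_closure_contract_of_not_indep (ha : M.IsNonloop a) (hC : M.closure {a} = C)
    (hx : x ∈ M.E \ C) (hy : y ∈ M.E \ C) (hT : ¬ M.Indep T) (hTs : T ⊆ {y, x, a}) :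
    y ∈ (M ／ C).closure {x} := by
  rw [closure_contract_closure hC, pair_comm]
  subst hC
  exact ⟨mem_closure_of_not_indep_subset_insert
    (ha.indep.insert_indep_iff.2 (Or.inl hx)) hT hTs hy.1, hy.2⟩

lemma mem_closure_singleton_of_not_indep (hx : M.IsNonloop x) (hC : M.closure {a} = C)
    (hy : y ∈ (M ／ C).closure {x}) (hz : z ∈ (M ／ C).E) (hzx : z ∉ (M ／ C).closure {x})
    (hT : ¬ M.Indep T) (hTs : T ⊆ {x, y, z}) : y ∈ M.closure {x} := by
  rw [closure_contract_closure hC] at hy hzx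
  by_contra hyx
  have hxy : M.Indep {x, y} := by
    rw [pair_comm]
    exact hx.indep.insert_indep_iff.2 (Or.inl ⟨M.closure_subset_ground _ hy.1, hyx⟩)
  have hzxy := mem_closure_of_not_indep_subset_insert hxy hT
    (hTs.trans (by simp [insert_subset_iff])) hz.1
  refine hzx ⟨M.closure_subset_closure_of_subset_closure ?_ hzxy, hz.2⟩
  exact pair_subset (M.mem_closure_of_mem' (mem_insert_of_mem a rfl) hx.mem_ground) hy.1

end General

section Configuration

local notation "𝔸" => ({0, 1, 2, 3} : Set (Fin 11))

def lines₁ : Set (Set (Fin 11)) :=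
  {{0, 1, 10}, {1, 2, 4}, {2, 3, 8}, {0, 3, 5}, {1, 3, 7}, {0, 2, 9}, {4, 5, 8}, {5, 6, 2},
    {6, 7, 9}, {7, 4, 0}, {4, 6, 3}, {5, 7, 10}, {8, 9, 1}, {9, 10, 4}, {10, 8, 6}}

lemma ncard_eq_three_of_mem_lines₁ {T : Set (Fin 11)} (hT : T ∈ lines₁) : T.ncard = 3 := by
  simp only [lines₁, mem_insert_iff, mem_singleton_iff] at hT
  rcases hT with rfl | rfl | rfl | rfl | rfl | rfl | rfl | rfl | rfl | rfl | rfl | rfl | rfl | rfl |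
    rfl <;>
  exact ncard_eq_three.2 ⟨_, _, _, by decide, by decide, by decide, rfl⟩

variable {M : Matroid (Fin 11)} [M.Loopless]

lemma contract_closure_eq_of_lines (hE : M.E = univ) (hA : M.closure {0} = 𝔸)
    (hdep : ∀ T ∈ lines₁, ¬ M.Indep T) :
    (M ／ 𝔸).closure {5} = (M ／ 𝔸).closure {4} ∧ (M ／ 𝔸).closure {6} = (M ／ 𝔸).closure {4} ∧
      (M ／ 𝔸).closure {7} = (M ／ 𝔸).closure {4} ∧
      (M ／ 𝔸).closure {9} = (M ／ 𝔸).closure {8} := by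
  have := loopless_contract_of_closure_eq hA
  have hpar : ∀ (a x y : Fin 11) (T), a ∈ 𝔸 → x ∉ 𝔸 → y ∉ 𝔸 → T ∈ lines₁ → T ⊆ {y, x, a} →
      (M ／ 𝔸).closure {y} = (M ／ 𝔸).closure {x} := by
    intro a x y T ha hx hy hT hTs
    have hclA : M.closure {a} = 𝔸 :=
      ((mem_closure_singleton_iff (hE ▸ mem_univ a)).1 (hA ▸ ha)).trans hA
    refine (mem_closure_singleton_iff (by simp [hE, hy])).1 ?_
    exact mem_closure_contract_of_not_indep (M.isNonloop_of_loopless (hE ▸ mem_univ a)) hclA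
      (by simp [hE, hx]) (by simp [hE, hy]) (hdep T hT) hTs
  have h6 := hpar 3 4 6 {4, 6, 3} (by simp) (by simp) (by simp) (by simp [lines₁])
    (by simp [insert_subset_iff])
  have h5 := hpar 2 6 5 {5, 6, 2} (by simp) (by simp) (by simp) (by simp [lines₁]) subset_rfl
  have h7 := hpar 0 4 7 {7, 4, 0} (by simp) (by simp) (by simp) (by simp [lines₁]) subset_rfl
  have h9 := hpar 1 8 9 {8, 9, 1} (by simp) (by simp) (by simp) (by simp [lines₁])
    (by simp [insert_subset_iff])
  exact ⟨h5.trans h6, h6, h7, h9⟩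

lemma contract_closure_ne_of_conn (hE : M.E = univ) (hA : M.closure {0} = 𝔸)
    (hdep : ∀ T ∈ lines₁, ¬ M.Indep T) (hN : Conn (M ／ 𝔸)) (hr : 1 < (M ／ 𝔸).eRank) :
    (M ／ 𝔸).closure {4} ≠ (M ／ 𝔸).closure {8} ∧ (M ／ 𝔸).closure {4} ≠ (M ／ 𝔸).closure {10} ∧
      (M ／ 𝔸).closure {8} ≠ (M ／ 𝔸).closure {10} := by
  have := loopless_contract_of_closure_eq hA
  obtain ⟨h5, h6, h7, h9⟩ := contract_closure_eq_of_lines hE hA hdep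
  have hcover : ∀ w ∈ (M ／ 𝔸).E, w ∈ (M ／ 𝔸).closure {4} ∨ w ∈ (M ／ 𝔸).closure {8} ∨
      w ∈ (M ／ 𝔸).closure {10} := by
    intro w hw
    have hww := (M ／ 𝔸).mem_closure_self w hw
    simp only [contract_ground, hE] at hw
    fin_cases w <;> simp_all
  have h4 : (4 : Fin 11) ∈ (M ／ 𝔸).E := by simp [hE]
  have h8 : (8 : Fin 11) ∈ (M ／ 𝔸).E := by simp [hE]
  have h10 : (10 : Fin 11) ∈ (M ／ 𝔸).E := by simp [hE]
  refine ⟨hN.closure_singleton_ne hr h4 h10 fun w hw => ?_,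
    hN.closure_singleton_ne hr h4 h8 fun w hw => ?_,
    hN.closure_singleton_ne hr h8 h4 fun w hw => ?_⟩ <;>
  · have := hcover w hw
    simp only [mem_union]
    tauto

lemma closure_eq_of_lines (hE : M.E = univ) (hA : M.closure {0} = 𝔸)
    (hdep : ∀ T ∈ lines₁, ¬ M.Indep T) (hN : Conn (M ／ 𝔸)) (hr : 1 < (M ／ 𝔸).eRank) :
    M.closure {5} = M.closure {4} ∧ M.closure {6} = M.closure {4} ∧
      M.closure {7} = M.closure {4} := by
  have := loopless_contract_of_closure_eq hA
  obtain ⟨h5, h6, h7, h9⟩ := contract_closure_eq_of_lines hE hA hdep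
  obtain ⟨h48, h410, -⟩ := contract_closure_ne_of_conn hE hA hdep hN hr
  have hNE : ∀ x ∉ 𝔸, x ∈ (M ／ 𝔸).E := fun x hx => by simp [hE, hx]
  have hpar : ∀ (x y z : Fin 11) (T), x ∉ 𝔸 → y ∉ 𝔸 → z ∉ 𝔸 → T ∈ lines₁ → T ⊆ {x, y, z} →
      (M ／ 𝔸).closure {y} = (M ／ 𝔸).closure {x} →
      (M ／ 𝔸).closure {z} ≠ (M ／ 𝔸).closure {x} → M.closure {y} = M.closure {x} := by
    intro x y z T hx hy hz hT hTs hxy hxz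
    refine (mem_closure_singleton_iff (hE ▸ mem_univ y)).1 ?_
    exact mem_closure_singleton_of_not_indep (M.isNonloop_of_loopless (hE ▸ mem_univ x)) hA
      ((mem_closure_singleton_iff (hNE y hy)).2 hxy) (hNE z hz)
      (fun h => hxz ((mem_closure_singleton_iff (hNE z hz)).1 h)) (hdep T hT) hTs
  have e5 := hpar 4 5 8 {4, 5, 8} (by simp) (by simp) (by simp) (by simp [lines₁]) subset_rfl
    h5 (Ne.symm h48)
  have e67 := hpar 6 7 9 {6, 7, 9} (by simp) (by simp) (by simp) (by simp [lines₁]) subset_rfl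
    (h7.trans h6.symm) (by rw [h9, h6]; exact Ne.symm h48)
  have e57 := hpar 5 7 10 {5, 7, 10} (by simp) (by simp) (by simp) (by simp [lines₁])
    subset_rfl (h7.trans h5.symm) (by rw [h5]; exact Ne.symm h410)
  exact ⟨e5, e67.symm.trans (e57.trans e5), e57.trans e5⟩

lemma closure_four_ten_of_lines (hE : M.E = univ) (hA : M.closure {0} = 𝔸)
    (hdep : ∀ T ∈ lines₁, ¬ M.Indep T) (hN : Conn (M ／ 𝔸)) (hr : 1 < (M ／ 𝔸).eRank) :
    (∀ w ∉ 𝔸, w ∈ M.closure {4, 10}) ∧ (0 : Fin 11) ∉ M.closure {4, 10} := by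
  have := loopless_contract_of_closure_eq hA
  obtain ⟨-, h410, h810⟩ := contract_closure_ne_of_conn hE hA hdep hN hr
  obtain ⟨e5, e6, e7⟩ := closure_eq_of_lines hE hA hdep hN hr
  have hE' : ∀ x : Fin 11, x ∈ M.E := fun x => hE ▸ mem_univ x
  have hnl : ∀ x : Fin 11, M.IsNonloop x := fun x => M.isNonloop_of_loopless (hE' x)
  have hoff : ∀ {x y : Fin 11}, x ∉ 𝔸 → y ∉ 𝔸 →
      (M ／ 𝔸).closure {y} ≠ (M ／ 𝔸).closure {x} → y ∉ M.closure {0, x} := by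
    intro x y hx hy hxy hyx
    refine hxy ((mem_closure_singleton_iff (by simp [hE, hy])).1 ?_)
    rw [closure_contract_closure hA]
    exact ⟨hyx, hy⟩
  have h10 : (10 : Fin 11) ∉ M.closure {0, 4} := hoff (by simp) (by simp) (Ne.symm h410)
  have h8 : (8 : Fin 11) ∉ M.closure {0, 10} := hoff (by simp) (by simp) h810
  have h4_10 : (4 : Fin 11) ∉ M.closure {10} := fun h =>
    h10 (M.closure_subset_closure (by simp) ((hnl 4).mem_closure_singleton h))
  have hi410 : M.Indep {4, 10} := (hnl 10).indep.insert_indep_iff.2 (Or.inl ⟨hE' 4, h4_10⟩)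
  have hi810 : M.Indep {8, 10} := (hnl 10).indep.insert_indep_iff.2
    (Or.inl ⟨hE' 8, fun h => h8 (M.closure_subset_closure (by simp) h)⟩)
  have h6 : (6 : Fin 11) ∈ M.closure {8, 10} := mem_closure_of_not_indep_subset_insert hi810
    (hdep {10, 8, 6} (by simp [lines₁])) (by simp [insert_subset_iff]) (hE' 6)
  have h4 : (4 : Fin 11) ∈ M.closure {8, 10} := M.closure_subset_closure_of_subset_closure
    (singleton_subset_iff.2 h6) (e6 ▸ M.mem_closure_self 4)
  have h9 : (9 : Fin 11) ∈ M.closure {4, 10} := mem_closure_of_not_indep_subset_insert hi410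
    (hdep {9, 10, 4} (by simp [lines₁])) (by simp [insert_subset_iff]) (hE' 9)
  have hL : ∀ x : Fin 11, M.closure {x} = M.closure {4} → x ∈ M.closure {4, 10} := fun x hx =>
    M.closure_subset_closure (by simp) (hx ▸ M.mem_closure_self x)
  have h0L : (0 : Fin 11) ∉ M.closure {4, 10} := by
    intro h0
    have h04 : (0 : Fin 11) ∉ M.closure {4} := fun h =>
      (by simp : (4 : Fin 11) ∉ 𝔸) (hA ▸ (hnl 0).mem_closure_singleton h)
    rw [pair_comm] at h0
    exact h10 (closure_exchange ⟨h0, h04⟩).1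
  refine ⟨fun w hw => ?_, h0L⟩
  fin_cases w
  iterate 4 exact absurd (by simp) hw
  exacts [hL 4 rfl, hL 5 e5, hL 6 e6, hL 7 e7, (closure_exchange ⟨h4, h4_10⟩).1, h9,
    M.mem_closure_of_mem' (by simp)]

lemma not_conn_of_lines (hE : M.E = univ) (hA : M.closure {0} = 𝔸)
    (hdep : ∀ T ∈ lines₁, ¬ M.Indep T) (hN : Conn (M ／ 𝔸)) (hr : 1 < (M ／ 𝔸).eRank) :
    ¬ Conn M := by
  obtain ⟨hL, h0L⟩ := closure_four_ten_of_lines hE hA hdep hN hr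
  refine not_conn_of_ground_eq_closure_union (hE ▸ mem_univ 0) ⟨4, hL 4 (by simp)⟩
    (subset_antisymm (fun w _ => ?_) ?_) (disjoint_closure_singleton h0L)
  · rw [hA]
    by_cases hw : w ∈ 𝔸
    exacts [Or.inl hw, Or.inr (hL w hw)]
  · exact union_subset (M.closure_subset_ground _) (M.closure_subset_ground _)

end Configuration

/-- For the rank-3 matroid `M₁` on `E = {a,…,k}` (encoded as `Fin 11` with
`a = 0, …, k = 10`) whose rank-2 flats are the fifteen listed triples, there is no
included matroid base system having `({a,b,c,d},1)_≤` as a facet-defining inequality: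
no connected matroid `M'` whose bases form a proper subset of the bases of `M₁` has
`{a,b,c,d}` as a flat of rank 1 with `M'|{a,b,c,d}` and `M'/{a,b,c,d}` both connected. -/
theorem no_included_matroid_with_facet (M₁ : Matroid (Fin 11)) (hE : M₁.E = Set.univ)
    (hbase : ∀ B : Set (Fin 11), M₁.IsBase B ↔ (B.ncard = 3 ∧
      ∀ F ∈ ({{0, 1, 10}, {1, 2, 4}, {2, 3, 8}, {0, 3, 5}, {1, 3, 7},
              {0, 2, 9}, {4, 5, 8}, {5, 6, 2}, {6, 7, 9}, {7, 4, 0},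
              {4, 6, 3}, {5, 7, 10}, {8, 9, 1}, {9, 10, 4}, {10, 8, 6}} :
                Set (Set (Fin 11))),
        (B ∩ F).ncard ≤ 2)) :
    ¬ ∃ M' : Matroid (Fin 11), M'.E = M₁.E ∧ Conn M' ∧
      {B : Set (Fin 11) | M'.IsBase B} ⊂ {B : Set (Fin 11) | M₁.IsBase B} ∧
      IsFlat M' {0, 1, 2, 3} ∧ rk M' {0, 1, 2, 3} = 1 ∧
      Conn (M' ↾ ({0, 1, 2, 3} : Set (Fin 11))) ∧
      Conn (contract M' ({0, 1, 2, 3} : Set (Fin 11))) := by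
  rintro ⟨M', hM'E, hConn, hss, hFlat, hrk1, -, hConnC⟩
  have hE' : M'.E = univ := hM'E.trans hE
  have : M'.Loopless := hConn.loopless (hE' ▸ nontrivial_univ)
  have h0 : M'.IsNonloop 0 := M'.isNonloop_of_loopless (by simp [hE'])
  have hA : M'.closure {0} = {0, 1, 2, 3} := hFlat.closure_singleton_eq hrk1 (by simp) h0
  have hrank : M'.eRank = 3 := by
    obtain ⟨B, hB⟩ := M'.exists_isBase
    rw [← hB.encard_eq_eRank, ← (toFinite B).cast_ncard_eq, ((hbase B).1 (hss.1 hB)).1]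
    rfl
  have hdep : ∀ T ∈ lines₁, ¬ M'.Indep T := by
    intro T hT
    have h3 := ncard_eq_three_of_mem_lines₁ hT
    refine not_indep_of_forall_isBase (fun B => @hss.1 B) (toFinite T)
      (by rw [hrank, ← (toFinite T).cast_ncard_eq, h3]; rfl) fun hB => ?_
    have := ((hbase T).1 hB).2 T hT
    rw [inter_self, h3] at this
    omega
  have hr : 1 < (M' ／ {0, 1, 2, 3}).eRank := by
    have := eRank_le_eRank_contract_closure_add_one h0
    rw [hA, hrank] at this
    exact (ENat.add_lt_add_iff_right ENat.one_ne_top).1 (lt_of_lt_of_le (by norm_num) this)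
  exact not_conn_of_lines hE' hA hdep hConnC hr hConn

end PaperWMO
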